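/- Let (T,λ) be an edge-labeled tree explaining ε and let e = uv be an inner edge of T with λ(e) = ⊗. Let T' be the (phylogenetic) tree obtained from T by contracting e, and let λ' be the labeling of T' inherited from λ on all remaining edges. Then (T',λ') explains ε. -/

import Mathlib

namespace GenFitch

/-- A rooted tree with leaf set `X`: a finite tree (acyclic connected simple
graph) with a distinguished root and an injective embedding of `X` onto the
set of vertices of degree at most one (the leaves). -/
structure RootedTree (X : Type) where
  V : Type
  fintypeV : Fintype V
  G : SimpleGraph V
  isTree : G.IsTree
  root : V
  leaf : X → V
  leaf_inj : Function.Injective leaf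
  leaf_iff : ∀ v : V, (∃ x : X, leaf x = v) ↔ (G.neighborSet v).ncard ≤ 1

namespace RootedTree

variable {X : Type}

/-- Degree of a vertex. -/
noncomputable def deg (T : RootedTree X) (v : T.V) : ℕ := (T.G.neighborSet v).ncard

/-- `v` is a leaf. -/
def IsLeaf (T : RootedTree X) (v : T.V) : Prop := ∃ x : X, T.leaf x = v

/-- `T` is phylogenetic: the root is an inner vertex of degree at least 2 and
every other inner vertex has degree at least 3. -/
def Phylo (T : RootedTree X) : Prop :=
  ¬ T.IsLeaf T.root ∧ 2 ≤ T.deg T.root ∧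
    ∀ v : T.V, ¬ T.IsLeaf v → v ≠ T.root → 3 ≤ T.deg v

/-- `T` is binary: the root has degree exactly 2 and every other inner vertex
has degree exactly 3. -/
def Binary (T : RootedTree X) : Prop :=
  T.deg T.root = 2 ∧ ∀ v : T.V, ¬ T.IsLeaf v → v ≠ T.root → T.deg v = 3

/-- `u` is an ancestor of `v` (written `u ⪰_T v`): `u` lies on the (unique)
path from the root to `v`. -/
def Anc (T : RootedTree X) (u v : T.V) : Prop :=
  ∀ p : T.G.Walk T.root v, p.IsPath → u ∈ p.support

/-- `l` is the least common ancestor of the set of vertices `S`. -/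
def IsLcaSet (T : RootedTree X) (l : T.V) (S : Set T.V) : Prop :=
  (∀ v ∈ S, T.Anc l v) ∧ ∀ u : T.V, (∀ v ∈ S, T.Anc u v) → T.Anc u l

/-- `T` displays the rooted triple `xy|z`, i.e. `lca(x,y) ≺ lca(x,y,z)`. -/
def Displays (T : RootedTree X) (x y z : X) : Prop :=
  ∃ l₂ l₃ : T.V, T.IsLcaSet l₂ {T.leaf x, T.leaf y} ∧
    T.IsLcaSet l₃ {T.leaf x, T.leaf y, T.leaf z} ∧ T.Anc l₃ l₂ ∧ l₂ ≠ l₃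

end RootedTree

/-- Some edge on the (unique) path from `lca(x,y)` to `y` carries the label
`m`.  Labels are drawn from `Option L`, with `none` playing the role of `⊗`. -/
def PathHasLabel {X L : Type} (T : RootedTree X) (lam : Sym2 T.V → Option L)
    (x y : X) (m : L) : Prop :=
  ∃ l : T.V, T.IsLcaSet l {T.leaf x, T.leaf y} ∧
    ∃ p : T.G.Walk l (T.leaf y), p.IsPath ∧ ∃ e ∈ p.edges, lam e = some m

/-- The edge-labeled tree `(T,lam)` explains the map `eps`:
for all distinct `x y`, `eps x y = some m` iff some edge on the path from
`lca(x,y)` to `y` has label `m`, and `eps x y = none` (i.e. `⊗`) iff no edge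
on that path carries a label in `L`. -/
def Explains {X L : Type} (T : RootedTree X) (lam : Sym2 T.V → Option L)
    (eps : X → X → Option L) : Prop :=
  ∀ x y : X, x ≠ y →
    ((∀ m : L, eps x y = some m ↔ PathHasLabel T lam x y m) ∧
     (eps x y = none ↔ ∀ m : L, ¬ PathHasLabel T lam x y m))

/-- `eps` is tree-like: some edge-labeled phylogenetic tree explains it. -/
def TreeLike {X L : Type} (eps : X → X → Option L) : Prop :=
  ∃ (T : RootedTree X) (lam : Sym2 T.V → Option L), T.Phylo ∧ Explains T lam eps

/-- The set `X_s` for a symbol `s ∈ M ∪ {⊗}` (encoded as `s : Option M`):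
those `x` having an in-arc labeled `s` and all other in-arcs labeled `⊗` or `s`. -/
def Xset {X M : Type} (eps : X → X → Option M) (s : Option M) : Set X :=
  {x : X | ∃ z : X, z ≠ x ∧ eps z x = s ∧
    ∀ z' : X, z' ≠ z → z' ≠ x → (eps z' x = none ∨ eps z' x = s)}

/-- The sets `X_s`, `s ∈ M ∪ {⊗}`, form a quasi-partition of `X`: pairwise
disjoint, union `X`, and at most one of them empty. -/
def QuasiPartition {X M : Type} (eps : X → X → Option M) : Prop :=
  (∀ s t : Option M, s ≠ t → Disjoint (Xset eps s) (Xset eps t)) ∧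
  (⋃ s : Option M, Xset eps s) = Set.univ ∧
  {s : Option M | Xset eps s = ∅}.Subsingleton

/-- A digraph `(Y, A)` is a simple Fitch graph: it is explained by a
`{1,⊗}`-edge-labeled phylogenetic tree on `Y` (a digraph on at most one
vertex is trivially explained by the trivial tree). -/
def IsFitchGraph (Y : Type) (A : Y → Y → Prop) : Prop :=
  Subsingleton Y ∨
  ∃ (T : RootedTree Y) (lam : Sym2 T.V → Option Unit), T.Phylo ∧
    ∀ x y : Y, x ≠ y → (A x y ↔ PathHasLabel T lam x y Unit.unit)

/-- `T'` is obtained from `T` by contracting (the fibers of) `φ`; equivalently,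
`T` refines `T'`. -/
structure IsContractionMap {X : Type} (T T' : RootedTree X) (φ : T.V → T'.V) :
    Prop where
  surj : Function.Surjective φ
  root_map : φ T.root = T'.root
  leaf_map : ∀ x : X, φ (T.leaf x) = T'.leaf x
  adj_map : ∀ a b : T.V, T.G.Adj a b → φ a = φ b ∨ T'.G.Adj (φ a) (φ b)
  adj_lift : ∀ u v : T'.V, T'.G.Adj u v →
    ∃ a b : T.V, T.G.Adj a b ∧ φ a = u ∧ φ b = v
  fiber_conn : ∀ u : T'.V, (T.G.induce {a : T.V | φ a = u}).Connected

/-- `(T,lam)` is a least-resolved tree explaining `eps`: it explains `eps` and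
no tree obtained from `T` by contracting one or more edges admits an
edge-labeling explaining `eps`. -/
def LeastResolved {X M : Type} (eps : X → X → Option M) (T : RootedTree X)
    (lam : Sym2 T.V → Option M) : Prop :=
  T.Phylo ∧ Explains T lam eps ∧
    ∀ (T' : RootedTree X) (φ : T.V → T'.V) (lam' : Sym2 T'.V → Option M),
      IsContractionMap T T' φ → ¬ Function.Injective φ → T'.Phylo →
        ¬ Explains T' lam' eps

/-- The rooted triple `xy|z` is informative for `eps`. -/
def Informative {X M : Type} (eps : X → X → Option M) (x y z : X) : Prop :=
  x ≠ y ∧ x ≠ z ∧ y ≠ z ∧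
  ∃ m : M, eps z x = some m ∧ eps z y = some m ∧ eps x z = eps y z ∧
    (eps x y = none ∨ eps x y = some m) ∧
    (eps y x = none ∨ eps y x = some m) ∧
    (eps x y = none ∨ eps y x = none)

/-- `T'` (a rooted tree on `Y`, with `incl : Y → X` and vertex embedding `ι`)
is the restriction `T|Y` of `T` to the leaf set `Y`: leaves map to leaves,
the ancestor relation is preserved and reflected, the vertices of `T'`
correspond exactly to the least common ancestors of pairs of `Y`-leaves in
`T`, and the root of `T'` corresponds to the least common ancestor of all
`Y`-leaves. -/
structure IsRestriction {X Y : Type} (T : RootedTree X) (incl : Y → X)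
    (T' : RootedTree Y) (ι : T'.V → T.V) : Prop where
  inj : Function.Injective ι
  leaf_map : ∀ y : Y, ι (T'.leaf y) = T.leaf (incl y)
  anc_iff : ∀ a b : T'.V, T'.Anc a b ↔ T.Anc (ι a) (ι b)
  image : ∀ v : T.V, (∃ a : T'.V, ι a = v) ↔
      ∃ y z : Y, T.IsLcaSet v {T.leaf (incl y), T.leaf (incl z)}
  root_map : T.IsLcaSet (ι T'.root) {v : T.V | ∃ y : Y, v = T.leaf (incl y)}

/-!
Contracting the edge `uv` does not change the ancestor relation among the surviving vertices:
the image of a path of `T` is a path of `T'` (a fibre of `φ` is at most the edge `uv`, and a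
tree has no triangles), so by uniqueness of paths the root path of `b` in `T` is mapped onto the
root path of `φ b` in `T'`. Hence `φ` maps `lca_T(x,y)` to `lca_T'(x,y)` and maps the path from
`lca_T(x,y)` to `y` onto the corresponding path of `T'`, losing only the edge `uv`, which
carries no label in `M`.
-/

end GenFitch

namespace SimpleGraph

variable {V V' : Type*} {G : SimpleGraph V} {G' : SimpleGraph V'}

lemma IsAcyclic.snd_eq_of_isPath_of_adj (hG : G.IsAcyclic) {x d : V} {p : G.Walk x d}
    (hp : p.IsPath) (hxd : G.Adj x d) : p.snd = d := by
  have hedge : (Walk.cons hxd Walk.nil).IsPath := by simp [hxd.ne]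
  have := (hG.subsingleton_path x d).elim ⟨p, hp⟩ ⟨_, hedge⟩
  simp only [Subtype.mk.injEq] at this
  simp [this]

namespace Walk

variable [DecidableEq V'] (f : V → V')
  (hf : ∀ a b, G.Adj a b → f a = f b ∨ G'.Adj (f a) (f b))

def contractMap : ∀ {a b : V}, G.Walk a b → G'.Walk (f a) (f b)
  | _, _, nil => nil
  | _, _, cons (v := c) h p =>
    if hc : f _ = f c then (contractMap p).copy hc.symm rfl
    else cons ((hf _ _ h).resolve_left hc) (contractMap p)

lemma mem_support_contractMap {a b : V} (p : G.Walk a b) (w : V') :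
    w ∈ (p.contractMap f hf).support ↔ w ∈ p.support.map f := by
  induction p with
  | nil => simp [contractMap]
  | cons h p ih =>
    rw [contractMap]
    split_ifs with hc
    · simp only [support_copy, ih, support_cons, List.map_cons, List.mem_cons, iff_or_self]
      rintro rfl
      exact hc ▸ List.mem_map_of_mem p.start_mem_support
    · simp [ih]

lemma edges_contractMap {a b : V} (p : G.Walk a b) :
    (p.contractMap f hf).edges = (p.edges.map (Sym2.map f)).filter (fun e => ¬ e.IsDiag) := by
  induction p with
  | nil => simp [contractMap]
  | cons h p ih =>
    rw [contractMap]
    split_ifs with hc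
    · simp [ih, hc]
    · simp [ih, hc]

lemma IsPath.contractMap (hG : G.IsAcyclic) (hfib : ∀ a b, f a = f b → a = b ∨ G.Adj a b)
    {a b : V} {p : G.Walk a b} (hp : p.IsPath) : (p.contractMap f hf).IsPath := by
  classical
  induction p with
  | nil => simp [Walk.contractMap]
  | @cons x y _ h p ih =>
    have hx : x ∉ p.support := ((cons_isPath_iff h p).1 hp).2
    rw [Walk.contractMap]
    split_ifs with hc
    · simpa using ih hp.of_cons
    · refine (cons_isPath_iff _ _).2 ⟨ih hp.of_cons, fun hmem => ?_⟩
      obtain ⟨d, hd, hdx⟩ := List.mem_map.1 ((mem_support_contractMap f hf p _).1 hmem)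
      have hxd : G.Adj x d := by
        rcases hfib d x hdx with rfl | hdx'
        exacts [absurd hd hx, hdx'.symm]
      have hq : (cons h (p.takeUntil d hd)).IsPath :=
        (cons_isPath_iff _ _).2 ⟨hp.of_cons.takeUntil hd,
          fun hx' => hx (p.support_takeUntil_subset_support hd hx')⟩
      have hyd : y = d := by simpa using hG.snd_eq_of_isPath_of_adj hq hxd
      exact hc (hyd ▸ hdx.symm)

end Walk

end SimpleGraph

namespace GenFitch

open SimpleGraph

namespace RootedTree

variable {X : Type} (T : RootedTree X)

noncomputable def path (a b : T.V) : T.G.Walk a b :=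
  (T.isTree.existsUnique_path a b).choose

lemma isPath_path (a b : T.V) : (T.path a b).IsPath :=
  (T.isTree.existsUnique_path a b).choose_spec.1

lemma eq_path {a b : T.V} {p : T.G.Walk a b} (hp : p.IsPath) : p = T.path a b :=
  (T.isTree.existsUnique_path a b).unique hp (T.isPath_path a b)

lemma anc_iff_mem_support {a b : T.V} : T.Anc a b ↔ a ∈ (T.path T.root b).support :=
  ⟨fun h => h _ (T.isPath_path _ _), fun h _ hp => T.eq_path hp ▸ h⟩

lemma anc_iff_prefix {a b : T.V} :
    T.Anc a b ↔ (T.path T.root a).support <+: (T.path T.root b).support := by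
  classical
  rw [anc_iff_mem_support]
  refine ⟨fun h => ?_, fun h => h.subset (T.path T.root a).end_mem_support⟩
  set p := T.path T.root b
  rw [← T.eq_path ((T.isPath_path T.root b).takeUntil h), ← p.take_spec h, Walk.support_append]
  exact List.prefix_append _ _

variable {T}

lemma anc_root (a : T.V) : T.Anc T.root a :=
  T.anc_iff_mem_support.2 (Walk.start_mem_support _)

lemma Anc.trans {a b c : T.V} (hab : T.Anc a b) (hbc : T.Anc b c) : T.Anc a c :=
  T.anc_iff_prefix.2 ((T.anc_iff_prefix.1 hab).trans (T.anc_iff_prefix.1 hbc))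

lemma Anc.antisymm {a b : T.V} (hab : T.Anc a b) (hba : T.Anc b a) : a = b := by
  have hab := T.anc_iff_prefix.1 hab
  have hsupp := hab.eq_of_length (le_antisymm hab.length_le (T.anc_iff_prefix.1 hba).length_le)
  rw [← (T.path T.root a).getLast_support, ← (T.path T.root b).getLast_support]
  simp only [hsupp]

lemma Anc.total_of_anc {a b c : T.V} (hac : T.Anc a c) (hbc : T.Anc b c) :
    T.Anc a b ∨ T.Anc b a := by
  simp only [anc_iff_prefix] at *
  exact List.prefix_or_prefix_of_prefix hac hbc

lemma anc_or_anc_of_adj {a b : T.V} (h : T.G.Adj a b) : T.Anc a b ∨ T.Anc b a := by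
  by_cases hb : b ∈ (T.path T.root a).support
  · exact Or.inr (T.anc_iff_mem_support.2 hb)
  · left
    rw [anc_iff_mem_support, ← T.eq_path ((T.isPath_path _ _).concat hb h)]
    simp [Walk.support_concat]

lemma isLcaSet_pair_iff {l a b : T.V} :
    T.IsLcaSet l {a, b} ↔
      T.Anc l a ∧ T.Anc l b ∧ ∀ c, T.Anc c a → T.Anc c b → T.Anc c l := by
  simp [IsLcaSet, and_assoc]

lemma IsLcaSet.unique {l l' : T.V} {S : Set T.V} (h : T.IsLcaSet l S) (h' : T.IsLcaSet l' S) :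
    l = l' :=
  (h'.2 l h.1).antisymm (h.2 l' h'.1)

variable (T)

lemma exists_isLcaSet (a b : T.V) : ∃ l, T.IsLcaSet l {a, b} := by
  classical
  have := T.fintypeV
  obtain ⟨l, hl, hmax⟩ :=
    Finset.exists_max_image (Finset.univ.filter fun c => T.Anc c a ∧ T.Anc c b)
      (fun c => (T.path T.root c).support.length) ⟨T.root, by simp [anc_root]⟩
  simp only [Finset.mem_filter, Finset.mem_univ, true_and] at hl hmax
  refine ⟨l, isLcaSet_pair_iff.2 ⟨hl.1, hl.2, fun c hca hcb => ?_⟩⟩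
  rcases hca.total_of_anc hl.1 with hcl | hlc
  · exact hcl
  · have hpre := T.anc_iff_prefix.1 hlc
    have hlen := le_antisymm hpre.length_le (hmax c ⟨hca, hcb⟩)
    rw [anc_iff_prefix, hpre.eq_of_length hlen]

end RootedTree

lemma pathHasLabel_iff_of_isLcaSet {X L : Type} {T : RootedTree X} (lam : Sym2 T.V → Option L)
    {l : T.V} {x y : X} (hl : T.IsLcaSet l {T.leaf x, T.leaf y}) (m : L) :
    PathHasLabel T lam x y m ↔ ∃ e ∈ (T.path l (T.leaf y)).edges, lam e = some m := by
  constructor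
  · rintro ⟨l', hl', p, hp, hlab⟩
    obtain rfl := hl'.unique hl
    rwa [← T.eq_path hp]
  · exact fun h => ⟨l, hl, _, T.isPath_path _ _, h⟩

section Contraction

variable {X : Type} {T T' : RootedTree X} {φ : T.V → T'.V}

lemma IsContractionMap.path_eq_contractMap [DecidableEq T'.V] (hcon : IsContractionMap T T' φ)
    (hfib : ∀ a b, φ a = φ b → a = b ∨ T.G.Adj a b) (a b : T.V) :
    T'.path (φ a) (φ b) = (T.path a b).contractMap φ hcon.adj_map :=
  (T'.eq_path (((T.isPath_path a b).contractMap φ hcon.adj_map T.isTree.isAcyclic hfib))).symm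

lemma IsContractionMap.anc_apply_iff (hcon : IsContractionMap T T' φ)
    (hfib : ∀ a b, φ a = φ b → a = b ∨ T.G.Adj a b)
    (w : T'.V) (b : T.V) :
    T'.Anc w (φ b) ↔ ∃ a, T.Anc a b ∧ φ a = w := by
  classical
  rw [T'.anc_iff_mem_support, ← hcon.root_map, hcon.path_eq_contractMap hfib,
    Walk.mem_support_contractMap, List.mem_map]
  simp only [RootedTree.anc_iff_mem_support]

lemma IsContractionMap.anc_apply (hcon : IsContractionMap T T' φ)
    (hfib : ∀ a b, φ a = φ b → a = b ∨ T.G.Adj a b)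
    {a b : T.V} (h : T.Anc a b) : T'.Anc (φ a) (φ b) :=
  (hcon.anc_apply_iff hfib _ _).2 ⟨a, h, rfl⟩

lemma IsContractionMap.isLcaSet_apply (hcon : IsContractionMap T T' φ)
    (hfib : ∀ a b, φ a = φ b → a = b ∨ T.G.Adj a b)
    {l a b : T.V} (hl : T.IsLcaSet l {a, b}) :
    T'.IsLcaSet (φ l) {φ a, φ b} := by
  obtain ⟨hla, hlb, hmax⟩ := RootedTree.isLcaSet_pair_iff.1 hl
  refine RootedTree.isLcaSet_pair_iff.2
    ⟨hcon.anc_apply hfib hla, hcon.anc_apply hfib hlb, fun w hwa hwb => ?_⟩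
  obtain ⟨c, hca, rfl⟩ := (hcon.anc_apply_iff hfib _ _).1 hwa
  obtain ⟨d, hdb, hdc⟩ := (hcon.anc_apply_iff hfib _ _).1 hwb
  suffices ∃ e, φ e = φ c ∧ T.Anc e a ∧ T.Anc e b by
    obtain ⟨e, he, hea, heb⟩ := this
    rw [← he]
    exact hcon.anc_apply hfib (hmax e hea heb)
  rcases hfib d c hdc with rfl | hdc'
  · exact ⟨d, rfl, hca, hdb⟩
  rcases RootedTree.anc_or_anc_of_adj hdc' with hd | hc
  · exact ⟨d, hdc, hd.trans hca, hdb⟩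
  · exact ⟨c, rfl, hca, hc.trans hdb⟩

lemma IsContractionMap.pathHasLabel_iff (hcon : IsContractionMap T T' φ)
    (hfib : ∀ a b, φ a = φ b → a = b ∨ T.G.Adj a b) {L : Type} {lam : Sym2 T.V → Option L}
    {lam' : Sym2 T'.V → Option L}
    (hcollapse : ∀ a b, T.G.Adj a b → φ a = φ b → lam s(a, b) = none)
    (hlam' : ∀ a b, T.G.Adj a b → φ a ≠ φ b → lam' s(φ a, φ b) = lam s(a, b))
    (x y : X) (m : L) :
    PathHasLabel T' lam' x y m ↔ PathHasLabel T lam x y m := by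
  classical
  obtain ⟨l, hl⟩ := T.exists_isLcaSet (T.leaf x) (T.leaf y)
  have hl' := hcon.isLcaSet_apply hfib hl
  simp only [hcon.leaf_map] at hl'
  rw [pathHasLabel_iff_of_isLcaSet _ hl, pathHasLabel_iff_of_isLcaSet _ hl', ← hcon.leaf_map,
    hcon.path_eq_contractMap hfib, Walk.edges_contractMap]
  simp only [List.mem_filter, List.mem_map, decide_not, Bool.not_eq_true',
    decide_eq_false_iff_not, and_assoc, exists_exists_and_eq_and]
  refine exists_congr fun e => and_congr_right fun he => ?_
  induction e using Sym2.ind with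
  | _ a b =>
  have hab : T.G.Adj a b := (T.path l (T.leaf y)).adj_of_mem_edges he
  by_cases hφ : φ a = φ b
  · simp [hφ, hcollapse a b hab hφ]
  · simp [hφ, hlam' a b hab hφ]

end Contraction

theorem stmt9_general {X M : Type}
    (eps : X → X → Option M)
    (T T' : RootedTree X)
    (lam : Sym2 T.V → Option M) (lam' : Sym2 T'.V → Option M)
    (hexp : Explains T lam eps)
    (u v : T.V) (huv : T.G.Adj u v)
    (hlab : lam s(u, v) = none)
    (φ : T.V → T'.V)
    (hcon : IsContractionMap T T' φ)
    (hfib : ∀ a b : T.V, φ a = φ b → a = b ∨ (a = u ∧ b = v) ∨ (a = v ∧ b = u))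
    (hlam' : ∀ a b : T.V, T.G.Adj a b → φ a ≠ φ b →
        lam' s(φ a, φ b) = lam s(a, b)) :
    Explains T' lam' eps := by
  have hfib_adj : ∀ a b, φ a = φ b → a = b ∨ T.G.Adj a b := by
    intro a b hab
    rcases hfib a b hab with h | ⟨rfl, rfl⟩ | ⟨rfl, rfl⟩
    exacts [Or.inl h, Or.inr huv, Or.inr huv.symm]
  have hcollapse : ∀ a b, T.G.Adj a b → φ a = φ b → lam s(a, b) = none := by
    intro a b hab hφ
    rcases hfib a b hφ with rfl | ⟨rfl, rfl⟩ | ⟨rfl, rfl⟩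
    exacts [(hab.ne rfl).elim, hlab, Sym2.eq_swap ▸ hlab]
  simpa only [Explains, hcon.pathHasLabel_iff hfib_adj hcollapse hlam'] using hexp

theorem stmt9 {X M : Type} [Fintype X] [Fintype M] [Nonempty M]
    (hX : 1 < Fintype.card X)
    (eps : X → X → Option M)
    (T T' : RootedTree X)
    (lam : Sym2 T.V → Option M) (lam' : Sym2 T'.V → Option M)
    (hphylo : T.Phylo) (hexp : Explains T lam eps)
    (u v : T.V) (huv : T.G.Adj u v)
    (hu : ¬ T.IsLeaf u) (hv : ¬ T.IsLeaf v)
    (hlab : lam s(u, v) = none)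
    (φ : T.V → T'.V) (hphylo' : T'.Phylo)
    (hcon : IsContractionMap T T' φ)
    (hmerge : φ u = φ v)
    (hfib : ∀ a b : T.V, φ a = φ b → a = b ∨ (a = u ∧ b = v) ∨ (a = v ∧ b = u))
    (hlam' : ∀ a b : T.V, T.G.Adj a b → φ a ≠ φ b →
        lam' s(φ a, φ b) = lam s(a, b)) :
    Explains T' lam' eps :=
  stmt9_general eps T T' lam lam' hexp u v huv hlab φ hcon hfib hlam'

end GenFitch
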